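/- arXiv:2102.04677 — 11 statements merged into one kernel-verified Lean document; each statement's English description precedes it below -/
import Mathlib

section
/- Let F be a filter on a set X and G a filter on a set Y. Then G is F-closed if and only if the left tensor product F ⋉ G equals the Cartesian product F × G. -/
open Filter Set Cardinal

universe u v w

/-- The left tensor product `F ⋉ G` of two filters. -/
def ltimes {X : Type u} {Y : Type v} (F : Filter X) (G : Filter Y) :
    Filter (X × Y) where
  sets := {R | {x | {y | (x, y) ∈ R} ∈ G} ∈ F}
  univ_sets := by simp
  sets_of_superset := by
    intro R S hR hRS
    refine Filter.mem_of_superset hR ?_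
    intro x hx
    exact Filter.mem_of_superset hx fun y hy => hRS hy
  inter_sets := by
    intro R S hR hS
    refine Filter.mem_of_superset (Filter.inter_mem hR hS) ?_
    rintro x ⟨hx1, hx2⟩
    exact Filter.inter_mem hx1 hx2

/-- The right tensor product `F ⋊ G` of two filters. -/
def rtimes {X : Type u} {Y : Type v} (F : Filter X) (G : Filter Y) :
    Filter (X × Y) where
  sets := {R | {y | {x | (x, y) ∈ R} ∈ F} ∈ G}
  univ_sets := by simp
  sets_of_superset := by
    intro R S hR hRS
    refine Filter.mem_of_superset hR ?_
    intro y hy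
    exact Filter.mem_of_superset hy fun x hx => hRS hx
  inter_sets := by
    intro R S hR hS
    refine Filter.mem_of_superset (Filter.inter_mem hR hS) ?_
    rintro y ⟨hy1, hy2⟩
    exact Filter.inter_mem hy1 hy2

/-- `IsFClosed F G` means: `G` is `F`-closed. -/
def IsFClosed {X : Type u} {Y : Type v} (F : Filter X) (G : Filter Y) : Prop :=
  ∀ B : X → Set Y, (∀ x, B x ∈ G) → ∃ A ∈ F, (⋂ x ∈ A, B x) ∈ G

/-- `IsRegularFor F G` means: `F` is `G`-regular. -/
def IsRegularFor {X : Type u} {Y : Type v} (F : Filter X) (G : Filter Y) : Prop :=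
  ∃ A : Y → Set X, (∀ y, A y ∈ F) ∧ ∀ B : Set Y, Bᶜ ∉ G → (⋂ y ∈ B, A y) = ∅

/-- The Katetov order on filters: `G ≤kat H` iff some pushforward of `H` extends `G`. -/
def Katetov {Y : Type u} {Z : Type v} (G : Filter Y) (H : Filter Z) : Prop :=
  ∃ f : Z → Y, Filter.map f H ≤ G

/-- A filter is an ultrafilter. -/
def IsUltra {α : Type u} (F : Filter α) : Prop :=
  ∃ V : Ultrafilter α, (V : Filter α) = F

/-- `(λ, η)`-indecomposability of a filter. -/
def Indecomposable {X : Type u} (F : Filter X) (lam eta : Cardinal.{u}) : Prop :=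
  ∀ P : Set (Set X), #P ≤ eta → ⋃₀ P ∈ F →
    ∃ Q ⊆ P, #Q < lam ∧ ⋃₀ Q ∈ F

/-- `λ`-decomposability: the negation of `(λ, λ)`-indecomposability. -/
def Decomposable {X : Type u} (F : Filter X) (lam : Cardinal.{u}) : Prop :=
  ¬ Indecomposable F lam lam

/-- `(κ, δ)`-regularity of a filter. -/
def CardRegular {X : Type u} (F : Filter X) (kappa delta : Cardinal.{u}) : Prop :=
  ∃ B : delta.out → Set X, (∀ α, B α ∈ F) ∧
    ∀ σ : Set delta.out, kappa ≤ #σ → (⋂ α ∈ σ, B α) = ∅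

/-- The Fréchet filter `F_λ(λ)`: subsets of (a set of size) `λ` whose complement
has cardinality less than `λ`. -/
def frechetFilter (lam : Cardinal.{u}) (h : ℵ₀ ≤ lam) : Filter lam.out where
  sets := {A | #(Aᶜ : Set lam.out) < lam}
  univ_sets := by
    have : #((Set.univ : Set lam.out)ᶜ : Set lam.out) = 0 := by simp
    simp only [Set.mem_setOf_eq, this]
    exact lt_of_lt_of_le aleph0_pos h
  sets_of_superset := by
    intro A B hA hAB
    exact lt_of_le_of_lt (Cardinal.mk_le_mk_of_subset (Set.compl_subset_compl.mpr hAB)) hA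
  inter_sets := by
    intro A B hA hB
    simp only [Set.mem_setOf_eq, Set.compl_inter]
    exact lt_of_le_of_lt (Cardinal.mk_union_le _ _) (Cardinal.add_lt_of_lt h hA hB)

/-- The dual of a filter `F` on `X`: the family of complements of members of `F`. -/
def dualFamily {X : Type u} (F : Filter X) : Set (Set X) := {s | sᶜ ∈ F}

/-- The fine filter `𝔽(F)` on the dual of `F`, generated by the sets
`{σ ∈ F* | x ∈ σ}` for `x ∈ X`. -/
def fineFilter {X : Type u} (F : Filter X) : Filter (dualFamily F) :=
  Filter.generate (Set.range fun x : X => {σ : dualFamily F | x ∈ σ.1})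

theorem fClosed_iff_ltimes_eq_prod {X : Type u} {Y : Type v}
    (F : Filter X) (G : Filter Y) :
    IsFClosed F G ↔ ltimes F G = F ×ˢ G := by
  have hmem : ∀ R : Set (X × Y), R ∈ ltimes F G ↔ {x | {y | (x, y) ∈ R} ∈ G} ∈ F :=
    fun R => Iff.rfl
  constructor
  · intro hcl
    refine le_antisymm ?_ ?_
    · -- ltimes ≤ F ×ˢ G, i.e. every member of prod is in ltimes
      intro R hR
      rw [Filter.mem_prod_iff] at hR
      obtain ⟨t, ht, u, hu, hsub⟩ := hR
      rw [hmem]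
      filter_upwards [ht] with x hx
      filter_upwards [hu] with y hy
      exact hsub ⟨hx, hy⟩
    · intro R hR
      rw [hmem] at hR
      set A := {x | {y | (x, y) ∈ R} ∈ G} with hA
      classical
      obtain ⟨A', hA', hC⟩ := hcl (fun x => if x ∈ A then {y | (x, y) ∈ R} else Set.univ)
        (fun x => by by_cases h : x ∈ A <;> simp [h, Filter.univ_mem] <;> exact h)
      rw [Filter.mem_prod_iff]
      refine ⟨A ∩ A', Filter.inter_mem hR hA', _, hC, ?_⟩
      rintro ⟨x, y⟩ ⟨⟨hx1, hx2⟩, hy⟩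
      have := Set.mem_iInter₂.mp hy x hx2
      simpa [hx1] using this
  · intro heq B hB
    have hR : {p : X × Y | p.2 ∈ B p.1} ∈ ltimes F G := by
      rw [hmem]
      have : {x | {y | (x, y) ∈ {p : X × Y | p.2 ∈ B p.1}} ∈ G} = Set.univ := by
        ext x; simp [hB x]
      rw [this]; exact Filter.univ_mem
    rw [heq, Filter.mem_prod_iff] at hR
    obtain ⟨t, ht, u, hu, hsub⟩ := hR
    refine ⟨t, ht, Filter.mem_of_superset hu ?_⟩
    intro y hy
    exact Set.mem_iInter₂.mpr fun x hx => hsub (show (x, y) ∈ t ×ˢ u from ⟨hx, hy⟩)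
end

section
/- Let U and W be ultrafilters on sets X and Y respectively. The following are equivalent: (1) the Cartesian product filter U × W is an ultrafilter on X×Y; (2) W is U-closed; (3) U is W-closed. -/
open Filter Set Cardinal

universe u v w

-- Auxiliary lemmas
private lemma mem_ltimes' {X : Type u} {Y : Type v} {F : Filter X} {G : Filter Y}
    {R : Set (X × Y)} : R ∈ ltimes F G ↔ {x | {y | (x, y) ∈ R} ∈ G} ∈ F := Iff.rfl

/-- `ltimes U W` is an ultrafilter when `U`, `W` are. -/
private def ltimesUltra {X : Type u} {Y : Type v} (U : Ultrafilter X) (W : Ultrafilter Y) :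
    Ultrafilter (X × Y) :=
  Ultrafilter.ofComplNotMemIff (ltimes (U : Filter X) (W : Filter Y)) (by
    intro R
    rw [mem_ltimes', mem_ltimes']
    have h1 : {x | {y | (x, y) ∈ Rᶜ} ∈ (W : Filter Y)} =
        {x | {y | (x, y) ∈ R} ∈ (W : Filter Y)}ᶜ := by
      ext x
      exact Ultrafilter.compl_mem_iff_notMem (f := W) (s := {y | (x, y) ∈ R})
    rw [h1]; exact Ultrafilter.compl_notMem_iff)

private lemma prod_subset_ltimes {X : Type u} {Y : Type v} (U : Ultrafilter X)
    (W : Ultrafilter Y) {R : Set (X × Y)} (hR : R ∈ (U : Filter X) ×ˢ (W : Filter Y)) :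
    R ∈ ltimes (U : Filter X) (W : Filter Y) := by
  rw [Filter.mem_prod_iff] at hR
  obtain ⟨A, hA, B, hB, hAB⟩ := hR
  rw [mem_ltimes']
  filter_upwards [hA] with x hx
  filter_upwards [hB] with y hy
  exact hAB ⟨hx, hy⟩

private lemma ultra_to_closed {X : Type u} {Y : Type v} (U : Ultrafilter X)
    (W : Ultrafilter Y) (h : IsUltra ((U : Filter X) ×ˢ (W : Filter Y))) :
    IsFClosed (U : Filter X) (W : Filter Y) := by
  obtain ⟨V, hV⟩ := h
  intro B hB
  set R : Set (X × Y) := {p | p.2 ∈ B p.1} with hRdef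
  have hRl : R ∈ ltimes (U : Filter X) (W : Filter Y) := by
    rw [mem_ltimes']
    have : {x | {y | (x, y) ∈ R} ∈ (W : Filter Y)} = Set.univ := by
      ext x; simp only [Set.mem_setOf_eq, Set.mem_univ, iff_true]
      exact hB x
    rw [this]; exact Filter.univ_mem
  -- R ∈ the product filter, else its complement would be, contradiction
  have hRp : R ∈ (U : Filter X) ×ˢ (W : Filter Y) := by
    by_contra hnot
    rw [← hV] at hnot
    have hc : Rᶜ ∈ (V : Filter (X × Y)) := (Ultrafilter.compl_mem_iff_notMem).2 hnot
    rw [hV] at hc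
    have hc' : Rᶜ ∈ ltimes (U : Filter X) (W : Filter Y) := prod_subset_ltimes U W hc
    have hint : R ∩ Rᶜ ∈ ltimes (U : Filter X) (W : Filter Y) := Filter.inter_mem hRl hc'
    rw [mem_ltimes'] at hint
    obtain ⟨x, hx⟩ := Filter.nonempty_of_mem hint
    have he : ({y | (x, y) ∈ R ∩ Rᶜ} : Set Y) = ∅ := by ext y; simp
    rw [Set.mem_setOf_eq, he] at hx
    exact Filter.empty_notMem _ hx
  rw [Filter.mem_prod_iff] at hRp
  obtain ⟨A, hA, C, hC, hAC⟩ := hRp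
  refine ⟨A, hA, Filter.mem_of_superset hC ?_⟩
  intro y hy
  simp only [Set.mem_iInter]
  intro x hx
  exact hAC (Set.mk_mem_prod hx hy)

private lemma closed_to_ultra {X : Type u} {Y : Type v} (U : Ultrafilter X)
    (W : Ultrafilter Y) (h : IsFClosed (U : Filter X) (W : Filter Y)) :
    IsUltra ((U : Filter X) ×ˢ (W : Filter Y)) := by
  refine ⟨ltimesUltra U W, ?_⟩
  have hcoe : (ltimesUltra U W : Filter (X × Y)) = ltimes (U : Filter X) (W : Filter Y) := rfl
  rw [hcoe]
  apply le_antisymm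
  · -- ltimes ≤ prod : every prod set is in ltimes
    intro R hR
    exact prod_subset_ltimes U W hR
  · -- prod ≤ ltimes : every ltimes set is in prod, using closedness
    intro R hR
    rw [mem_ltimes'] at hR
    set A0 := {x | {y | (x, y) ∈ R} ∈ (W : Filter Y)} with hA0def
    classical
    set B : X → Set Y := fun x => if x ∈ A0 then {y | (x, y) ∈ R} else Set.univ with hBdef
    have hBmem : ∀ x, B x ∈ (W : Filter Y) := by
      intro x
      by_cases hx : x ∈ A0
      · simp only [hBdef, if_pos hx]; exact hx
      · simp [hBdef, hx]
    obtain ⟨A, hA, hInt⟩ := h B hBmem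
    rw [Filter.mem_prod_iff]
    refine ⟨A ∩ A0, Filter.inter_mem hA hR, ⋂ x ∈ A, B x, hInt, ?_⟩
    rintro ⟨x, y⟩ ⟨⟨hxA, hxA0⟩, hy⟩
    simp only [Set.mem_iInter] at hy
    have := hy x hxA
    rw [hBdef] at this
    simp only [if_pos hxA0] at this
    exact this

private lemma isUltra_swap {X : Type u} {Y : Type v} {F : Filter X} {G : Filter Y}
    (h : IsUltra (F ×ˢ G)) : IsUltra (G ×ˢ F) := by
  obtain ⟨V, hV⟩ := h
  refine ⟨V.map (fun p : X × Y => (p.2, p.1)), ?_⟩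
  rw [Ultrafilter.coe_map, hV]; exact Filter.prod_comm.symm

theorem prod_ultrafilter_iff_closed {X : Type u} {Y : Type v}
    (U : Ultrafilter X) (W : Ultrafilter Y) :
    (IsUltra ((U : Filter X) ×ˢ (W : Filter Y)) ↔ IsFClosed (U : Filter X) (W : Filter Y)) ∧
    (IsFClosed (U : Filter X) (W : Filter Y) ↔ IsFClosed (W : Filter Y) (U : Filter X)) := by
  constructor
  · exact ⟨fun h => ultra_to_closed U W h, fun h => closed_to_ultra U W h⟩
  · constructor
    · intro h
      exact ultra_to_closed W U (isUltra_swap (closed_to_ultra U W h))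
    · intro h
      exact ultra_to_closed U W (isUltra_swap (closed_to_ultra W U h))
end

section
/- Let F be a filter on a set X and G a filter on a set Y. Then F is G-regular if and only if the left tensor product F ⋉ G and the right tensor product F ⋊ G are incompatible, i.e., there exist R ∈ F ⋉ G and S ∈ F ⋊ G with R ∩ S = ∅. -/
open Filter Set Cardinal

universe u v w

theorem regular_iff_tensor_incompatible {X : Type u} {Y : Type v}
    (F : Filter X) (G : Filter Y) :
    IsRegularFor F G ↔ ∃ R ∈ ltimes F G, ∃ S ∈ rtimes F G, R ∩ S = ∅ := by
  have mem_lt : ∀ R : Set (X × Y), R ∈ ltimes F G ↔ {x | {y | (x, y) ∈ R} ∈ G} ∈ F :=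
    fun _ => Iff.rfl
  have mem_rt : ∀ S : Set (X × Y), S ∈ rtimes F G ↔ {y | {x | (x, y) ∈ S} ∈ F} ∈ G :=
    fun _ => Iff.rfl
  constructor
  · rintro ⟨A, hA, hreg⟩
    refine ⟨{p | p.1 ∉ A p.2}, ?_, {p | p.1 ∈ A p.2}, ?_, ?_⟩
    · rw [mem_lt]
      have h : {x | {y | (x, y) ∈ {p : X × Y | p.1 ∉ A p.2}} ∈ G} = Set.univ := by
        ext x
        simp only [Set.mem_setOf_eq, Set.mem_univ, iff_true]
        by_contra h
        have hB : ({y | x ∈ A y})ᶜ ∉ G := by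
          convert h using 2
          rfl
        have heq := hreg _ hB
        have hx : x ∈ ⋂ y ∈ {y | x ∈ A y}, A y :=
          Set.mem_iInter₂.mpr fun y hy => hy
        rw [heq] at hx
        exact hx
      rw [h]; exact Filter.univ_mem
    · rw [mem_rt]
      have h : {y | {x | (x, y) ∈ {p : X × Y | p.1 ∈ A p.2}} ∈ F} = Set.univ := by
        ext y
        simp only [Set.mem_setOf_eq, Set.mem_univ, iff_true]
        exact hA y
      rw [h]; exact Filter.univ_mem
    · ext ⟨x, y⟩
      simp
  · rintro ⟨R, hR, S, hS, hRS⟩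
    classical
    rw [mem_lt] at hR
    rw [mem_rt] at hS
    set U := {x | {y | (x, y) ∈ R} ∈ G} with hUdef
    refine ⟨fun y => if {x | (x, y) ∈ S} ∈ F then {x | (x, y) ∈ S} ∩ U else U, ?_, ?_⟩
    · intro y
      by_cases h : {x | (x, y) ∈ S} ∈ F
      · simpa [h] using Filter.inter_mem h hR
      · simpa [h] using hR
    · intro B hB
      by_contra hne
      obtain ⟨x, hx⟩ := Set.nonempty_iff_ne_empty.mpr hne
      have hBne : B.Nonempty := by
        rcases Set.eq_empty_or_nonempty B with h | h
        · exfalso; apply hB; rw [h, Set.compl_empty]; exact Filter.univ_mem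
        · exact h
      have hxU : x ∈ U := by
        obtain ⟨y0, hy0⟩ := hBne
        have hx0 := Set.mem_iInter₂.mp hx y0 hy0
        by_cases h : {x | (x, y0) ∈ S} ∈ F
        · simp only [h, if_true] at hx0; exact hx0.2
        · simpa [h] using hx0
      have hRx : {y | (x, y) ∈ R} ∈ G := hxU
      have hmem : ({y | {x | (x, y) ∈ S} ∈ F} ∩ {y | (x, y) ∈ R}) ∈ G :=
        Filter.inter_mem hS hRx
      have hex : ∃ y ∈ B, y ∈ {y | {x | (x, y) ∈ S} ∈ F} ∩ {y | (x, y) ∈ R} := by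
        by_contra h
        push_neg at h
        apply hB
        exact Filter.mem_of_superset hmem fun y hy => by
          by_contra hyB
          exact h y (not_not.mp hyB) hy
      obtain ⟨y, hyB, hyT, hyR⟩ := hex
      have hxy := Set.mem_iInter₂.mp hx y hyB
      rw [Set.mem_setOf_eq] at hyT
      simp only [if_pos hyT] at hxy
      have : (x, y) ∈ R ∩ S := ⟨hyR, hxy.1⟩
      rw [hRS] at this
      exact this
end

section
/- Let F be a filter on a set X and G a filter on a set Y. Then F is G-regular if and only if G is F-regular. -/
open Filter Set Cardinal

universe u v w

lemma regular_symm_aux {X : Type u} {Y : Type v} (F : Filter X) (G : Filter Y)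
    (h : IsRegularFor F G) : IsRegularFor G F := by
  obtain ⟨A, hA, hInt⟩ := h
  refine ⟨fun x => {y | x ∉ A y}, ?_, ?_⟩
  · intro x
    by_contra h
    have hpos : ({y | x ∈ A y} : Set Y)ᶜ ∉ G := by
      simpa [Set.compl_setOf] using h
    have := hInt {y | x ∈ A y} hpos
    have hx : x ∈ ⋂ y ∈ {y | x ∈ A y}, A y := by
      simp only [Set.mem_iInter]
      intro y hy; exact hy
    rw [this] at hx
    exact hx
  · intro S hS
    ext y
    simp only [Set.mem_iInter, Set.mem_setOf_eq, Set.mem_empty_iff_false, iff_false]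
    intro hy
    exact hS (Filter.mem_of_superset (hA y) fun x hx hxS => hy x hxS hx)

theorem regular_symm {X : Type u} {Y : Type v} (F : Filter X) (G : Filter Y) :
    IsRegularFor F G ↔ IsRegularFor G F :=
  ⟨regular_symm_aux F G, regular_symm_aux G F⟩
end

section
/- Let U and W be ultrafilters on sets X and Y respectively. Then U is W-nonregular (i.e., U is not W-regular) if and only if the left and right tensor products coincide: U ⋉ W = U ⋊ W. -/
open Filter Set Cardinal

universe u v w

/-!
If `⟨A_y⟩` witnesses that `U` is `W`-regular, the relation `{(x, y) | x ∈ A_y}` has all its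
vertical sections in `U`, so it lies in `U ⋊ W`, while a horizontal section lying in `W` would
put a point in an intersection that regularity makes empty, so it is not in `U ⋉ W`.
Conversely, since both tensor products are ultrafilters, they differ exactly when some `R` lies in
`U ⋊ W` but not in `U ⋉ W`. Then `C = {x | R_x ∉ W}` is in `U` and `A_y = C ∩ R^y` (or `C` when
`R^y ∉ U`) witnesses regularity: a point of `⋂_{y ∈ B} A_y` with `B ∈ W` would have `R_x ⊇ B ∩ B'`,
where `B' = {y | R^y ∈ U} ∈ W`, contradicting `x ∈ C`.
-/

section Tensor

variable {X : Type u} {Y : Type v}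

theorem compl_mem_ltimes_iff (U : Ultrafilter X) (W : Ultrafilter Y) (R : Set (X × Y)) :
    Rᶜ ∈ ltimes (U : Filter X) (W : Filter Y) ↔ R ∉ ltimes (U : Filter X) (W : Filter Y) := by
  change {x | {y | (x, y) ∈ R}ᶜ ∈ W} ∈ U ↔ ¬ {x | {y | (x, y) ∈ R} ∈ W} ∈ U
  simp only [Ultrafilter.compl_mem_iff_notMem]
  exact Ultrafilter.compl_mem_iff_notMem

theorem compl_mem_rtimes_iff (U : Ultrafilter X) (W : Ultrafilter Y) (R : Set (X × Y)) :
    Rᶜ ∈ rtimes (U : Filter X) (W : Filter Y) ↔ R ∉ rtimes (U : Filter X) (W : Filter Y) := by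
  change {y | {x | (x, y) ∈ R}ᶜ ∈ U} ∈ W ↔ ¬ {y | {x | (x, y) ∈ R} ∈ U} ∈ W
  simp only [Ultrafilter.compl_mem_iff_notMem]
  exact Ultrafilter.compl_mem_iff_notMem

theorem ltimes_eq_rtimes_iff_le (U : Ultrafilter X) (W : Ultrafilter Y) :
    ltimes (U : Filter X) (W : Filter Y) = rtimes (U : Filter X) (W : Filter Y) ↔
      ltimes (U : Filter X) (W : Filter Y) ≤ rtimes (U : Filter X) (W : Filter Y) := by
  refine ⟨le_of_eq, fun hle => le_antisymm hle fun R hR => ?_⟩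
  by_contra hRr
  exact (compl_mem_ltimes_iff U W R).1 (hle ((compl_mem_rtimes_iff U W R).2 hRr)) hR

theorem IsRegularFor.exists_mem_rtimes_notMem_ltimes {F : Filter X} {G : Filter Y}
    [F.NeBot] [G.NeBot] (hreg : IsRegularFor F G) :
    ∃ R ∈ rtimes F G, R ∉ ltimes F G := by
  obtain ⟨A, hAF, hA⟩ := hreg
  refine ⟨{p | p.1 ∈ A p.2}, ?_, fun hl => ?_⟩
  · change {y | A y ∈ F} ∈ G
    simp only [hAF, ofPred_true, univ_mem]
  · obtain ⟨x, hx⟩ := Filter.nonempty_of_mem (f := F) hl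
    exact (hA _ (compl_notMem hx)).subset (mem_iInter₂.2 fun _ hy => hy)

theorem isRegularFor_of_mem_rtimes_of_notMem_ltimes (U : Ultrafilter X) (W : Ultrafilter Y)
    {R : Set (X × Y)} (hr : R ∈ rtimes (U : Filter X) (W : Filter Y))
    (hl : R ∉ ltimes (U : Filter X) (W : Filter Y)) :
    IsRegularFor (U : Filter X) (W : Filter Y) := by
  set C : Set X := {x | {y | (x, y) ∈ R} ∈ W}ᶜ
  set B' : Set Y := {y | {x | (x, y) ∈ R} ∈ U}
  have hC : C ∈ U := Ultrafilter.compl_mem_iff_notMem.2 hl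
  refine ⟨fun y => C ∩ {x | y ∈ B' → (x, y) ∈ R}, fun y => ?_, fun B hB => ?_⟩
  · by_cases hy : y ∈ B'
    · exact inter_mem hC (mem_of_superset hy fun x hx _ => hx)
    · simpa [hy] using hC
  · refine eq_empty_of_forall_notMem fun x hx => ?_
    rw [mem_iInter₂] at hx
    have hBB' : B ∩ B' ∈ W := inter_mem (Ultrafilter.compl_notMem_iff.1 hB) hr
    obtain ⟨y₀, hy₀, -⟩ := Ultrafilter.nonempty_of_mem hBB'
    exact (hx y₀ hy₀).1 (mem_of_superset hBB' fun y ⟨hyB, hyB'⟩ => (hx y hyB).2 hyB')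

end Tensor

theorem nonregular_iff_tensor_comm {X : Type u} {Y : Type v}
    (U : Ultrafilter X) (W : Ultrafilter Y) :
    ¬ IsRegularFor (U : Filter X) (W : Filter Y) ↔
      ltimes (U : Filter X) (W : Filter Y) = rtimes (U : Filter X) (W : Filter Y) := by
  rw [ltimes_eq_rtimes_iff_le, ← not_iff_not, not_not, Filter.not_le]
  constructor
  · exact IsRegularFor.exists_mem_rtimes_notMem_ltimes
  · rintro ⟨R, hr, hl⟩
    exact isRegularFor_of_mem_rtimes_of_notMem_ltimes U W hr hl
end

section
/- Let F be a filter on a set X and G a filter on a set Y. Then F is G-regular if and only if the fine filter 𝔽(F) on the dual of F lies below G in the Katetov order, i.e., 𝔽(F) ≤_kat G. -/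
open Filter Set Cardinal

universe u v w

theorem regular_iff_fine_katetov {X : Type u} {Y : Type v}
    (F : Filter X) (G : Filter Y) :
    IsRegularFor F G ↔ Katetov (fineFilter F) G := by
  constructor
  · rintro ⟨A, hA, hreg⟩
    refine ⟨fun y => ⟨(A y)ᶜ, by simpa [dualFamily] using hA y⟩, ?_⟩
    rw [fineFilter, Filter.le_generate_iff]
    rintro _ ⟨x, rfl⟩
    simp only [Filter.mem_sets, Filter.mem_map]
    by_contra h
    have hB := hreg {y | x ∈ A y} ?_
    · have hx : x ∈ ⋂ y ∈ {y | x ∈ A y}, A y := by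
        simp only [Set.mem_iInter]
        intro y hy
        exact hy
      rw [hB] at hx
      exact hx
    · intro hc
      apply h
      refine Filter.mem_of_superset hc ?_
      intro y hy
      simpa using hy
  · rintro ⟨f, hf⟩
    refine ⟨fun y => (f y).1ᶜ, fun y => (f y).2, ?_⟩
    intro B hB
    ext x
    simp only [Set.mem_iInter, Set.mem_empty_iff_false, iff_false]
    intro hx
    apply hB
    have hSx : {σ : dualFamily F | x ∈ σ.1} ∈ fineFilter F :=
      Filter.mem_generate_of_mem ⟨x, rfl⟩
    have hG : f ⁻¹' {σ : dualFamily F | x ∈ σ.1} ∈ G := hf hSx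
    refine Filter.mem_of_superset hG ?_
    intro y hy hyB
    exact (hx y hyB) hy
end

section
/- Let F, G, H be filters. If F is G-regular and G ≤_kat H in the Katetov order, then F is H-regular. -/
open Filter Set Cardinal

universe u v w

theorem regular_of_katetov {X : Type u} {Y : Type v} {Z : Type w}
    (F : Filter X) (G : Filter Y) (H : Filter Z)
    (hFG : IsRegularFor F G) (hGH : Katetov G H) : IsRegularFor F H := by
  obtain ⟨A, hA, hreg⟩ := hFG
  obtain ⟨f, hf⟩ := hGH
  refine ⟨fun z => A (f z), fun z => hA (f z), fun B hB => ?_⟩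
  have him : (f '' B)ᶜ ∉ G := by
    intro h
    apply hB
    have := hf h
    rw [Filter.mem_map] at this
    refine Filter.mem_of_superset this ?_
    intro z hz hzB
    exact hz ⟨z, hzB, rfl⟩
  have := hreg (f '' B) him
  apply Set.eq_empty_of_subset_empty
  rw [← this]
  intro x hx
  simp only [Set.mem_iInter] at hx ⊢
  rintro y ⟨z, hz, rfl⟩
  exact hx z hz
end

section
/- Let U be an ultrafilter and λ an infinite cardinal. If U is (λ,λ)-nonregular (i.e., not (λ,λ)-regular), then U is (λ, λ⁺)-indecomposable. -/
open Filter Set Cardinal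

universe u v w

lemma cardRegular_of_family' {X : Type u} (F : Filter X) (lam : Cardinal.{u})
    {I : Type u} (hI : #I = lam) (B : I → Set X) (hB : ∀ i, B i ∈ F)
    (hsmall : ∀ x, #{i | x ∈ B i} < lam) :
    CardRegular F lam lam := by
  obtain ⟨e⟩ : Nonempty (lam.out ≃ I) := Cardinal.eq.mp (by rw [hI, mk_out])
  refine ⟨fun a => B (e a), fun a => hB _, ?_⟩
  intro σ hσ
  by_contra h
  obtain ⟨x, hx⟩ := Set.nonempty_iff_ne_empty.2 h
  simp only [Set.mem_iInter] at hx
  have hinj : Function.Injective (fun a : σ => (⟨e a.1, hx a.1 a.2⟩ : {i | x ∈ B i})) := by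
    intro a b hab
    have := congrArg Subtype.val hab
    simp only at this
    exact Subtype.ext (e.injective this)
  exact absurd (hσ.trans (Cardinal.mk_le_of_injective hinj)) (not_le.mpr (hsmall x))

theorem indecomposable_of_nonregular {X : Type u} (U : Ultrafilter X)
    (lam : Cardinal.{u}) (hlam : ℵ₀ ≤ lam)
    (hnr : ¬ CardRegular (U : Filter X) lam lam) :
    Indecomposable (U : Filter X) lam (Order.succ lam) := by
  intro P hPcard hPU
  classical
  by_contra hcon
  push_neg at hcon
  exfalso
  apply hnr
  -- minimal cardinality of a large subfamily
  obtain ⟨κ, ⟨Q₀, hQ₀P, hQ₀card, hQ₀U⟩, hmin⟩ :=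
    Cardinal.lt_wf.has_min {c | ∃ Q ⊆ P, #Q = c ∧ ⋃₀ Q ∈ (U : Filter X)}
      ⟨#P, P, subset_rfl, rfl, hPU⟩
  have hminQ : ∀ Q ⊆ P, ⋃₀ Q ∈ (U : Filter X) → ¬ #Q < κ := fun Q hQP hQU =>
    hmin _ ⟨Q, hQP, rfl, hQU⟩
  have hκlam : lam ≤ κ := by
    by_contra h
    push_neg at h
    rw [← hQ₀card] at h
    exact hcon Q₀ hQ₀P h hQ₀U
  have hκinf : ℵ₀ ≤ κ := hlam.trans hκlam
  have hκsucc : κ ≤ Order.succ lam := hQ₀card ▸ (mk_le_mk_of_subset hQ₀P).trans hPcard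
  -- the well-ordered index type
  set T := κ.ord.ToType with hT
  have hTcard : #T = κ := mk_ord_toType κ
  haveI hTne : Nonempty T := mk_ne_zero_iff.mp (by rw [hTcard]; exact (aleph0_pos.trans_le hκinf).ne')
  obtain ⟨qe⟩ : Nonempty (T ≃ ↥Q₀) := Cardinal.eq.mp (by rw [hTcard, hQ₀card])
  set q : T → Set X := fun β => (qe β : Set X) with hq
  have hqP : ∀ β, q β ∈ P := fun β => hQ₀P (qe β).2
  -- least index function
  have wf : WellFounded ((· < ·) : T → T → Prop) := IsWellFounded.wf
  set A : X → Set T := fun x => {β | x ∈ q β} with hA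
  set f : X → T := fun x =>
    if h : (A x).Nonempty then wf.min (A x) h else Classical.arbitrary T with hf
  have hAne : ∀ {x}, x ∈ ⋃₀ Q₀ → (A x).Nonempty := by
    rintro x ⟨t, htQ, hxt⟩
    refine ⟨qe.symm ⟨t, htQ⟩, ?_⟩
    show x ∈ q _
    rw [hq]
    simp only [Equiv.apply_symm_apply]
    exact hxt
  have hf1 : ∀ {x}, x ∈ ⋃₀ Q₀ → x ∈ q (f x) := by
    intro x hx
    rw [hf]
    simp only [dif_pos (hAne hx)]
    exact wf.min_mem (A x) (hAne hx)
  have hf2 : ∀ {x β}, x ∈ q β → f x ≤ β := by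
    intro x β hβ
    have hne : (A x).Nonempty := ⟨β, hβ⟩
    rw [hf]
    simp only [dif_pos hne]
    exact le_of_not_gt (wf.not_lt_min (A x) hβ)
  -- the tail sets
  set G : T → Set X := fun β => ⋃₀ Q₀ \ ⋃ γ ∈ Iic β, q γ with hG
  have hGU : ∀ β, G β ∈ (U : Filter X) := by
    intro β
    have hsub : q '' Iic β ⊆ P := fun s ⟨γ, _, hγ⟩ => hγ ▸ hqP γ
    have hIic : #(Iic β) < κ := by
      have h1 : (Iic β : Set T) ⊆ insert β (Iio β) := by
        intro γ hγ
        rcases eq_or_lt_of_le (mem_Iic.mp hγ) with h | h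
        · exact mem_insert_iff.mpr (Or.inl h)
        · exact mem_insert_iff.mpr (Or.inr h)
      calc #(Iic β) ≤ #(insert β (Iio β) : Set T) := mk_le_mk_of_subset h1
        _ ≤ #(Iio β) + 1 := mk_insert_le
        _ < κ := Cardinal.add_lt_of_lt hκinf (mk_Iio_ord_toType β) (one_lt_aleph0.trans_le hκinf)
    have hcard : #(q '' Iic β) < κ := (mk_image_le).trans_lt hIic
    have hnotU : ⋃₀ (q '' Iic β) ∉ (U : Filter X) := by
      intro hU
      exact hminQ _ hsub hU hcard
    have hcompl : (⋃ γ ∈ Iic β, q γ)ᶜ ∈ U := by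
      rw [← sUnion_image]
      exact (Ultrafilter.compl_mem_iff_notMem).mpr hnotU
    rw [hG]
    simp only [diff_eq]
    exact inter_mem hQ₀U hcompl
  have hGiff : ∀ {x β}, x ∈ G β ↔ x ∈ ⋃₀ Q₀ ∧ β < f x := by
    intro x β
    constructor
    · rintro ⟨hx1, hx2⟩
      refine ⟨hx1, ?_⟩
      by_contra h
      push_neg at h
      exact hx2 (mem_biUnion (mem_Iic.mpr h) (hf1 hx1))
    · rintro ⟨hx1, hx2⟩
      refine ⟨hx1, fun hmem => ?_⟩
      obtain ⟨γ, hγ, hxγ⟩ := mem_iUnion₂.mp hmem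
      exact absurd ((hf2 hxγ).trans hγ) (not_le.mpr hx2)
  -- case split on κ
  rcases eq_or_lt_of_le hκlam with hcase | hcase
  · -- κ = lam : the tail sets themselves witness regularity
    refine cardRegular_of_family' _ lam (hcase ▸ hTcard) G hGU ?_
    intro x
    have hsub : {β | x ∈ G β} ⊆ Iio (f x) := fun β hβ => (hGiff.mp hβ).2
    calc #{β | x ∈ G β} ≤ #(Iio (f x)) := mk_le_mk_of_subset hsub
      _ < κ := mk_Iio_ord_toType (f x)
      _ = lam := hcase.symm
  · -- κ = succ lam
    have hκeq : κ = Order.succ lam := le_antisymm hκsucc (Order.succ_le_of_lt hcase)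
    have hIiole : ∀ β : T, #(Iio β) ≤ lam := by
      intro β
      exact Order.lt_succ_iff.mp ((mk_Iio_ord_toType β).trans_le hκeq.le)
    set J := lam.ord.ToType with hJ
    have hJcard : #J = lam := mk_ord_toType lam
    haveI hJne : Nonempty J := mk_ne_zero_iff.mp (by rw [hJcard]; exact (aleph0_pos.trans_le hlam).ne')
    have hE0 : ∀ β : T, Nonempty (↥(Iio β) ↪ J) := fun β =>
      (Cardinal.le_def _ _).mp (by rw [hJcard]; exact hIiole β)
    set E0 : ∀ β : T, ↥(Iio β) ↪ J := fun β => (hE0 β).some with hE0def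
    set E : T → T → J := fun δ β =>
      if h : β < δ then E0 δ ⟨β, h⟩ else Classical.arbitrary J with hE
    have hEinj : ∀ δ {β β'}, β < δ → β' < δ → E δ β = E δ β' → β = β' := by
      intro δ β β' h h' heq
      rw [hE] at heq
      simp only [dif_pos h, dif_pos h'] at heq
      exact congrArg Subtype.val ((E0 δ).injective heq)
    set Ts : T → J → Set X := fun β i => {x ∈ G β | i ≤ E (f x) β} with hTs
    by_cases hcaseA : ∃ β, ∀ i, Ts β i ∈ (U : Filter X)
    · obtain ⟨β, hβ⟩ := hcaseA
      refine cardRegular_of_family' _ lam hJcard (Ts β) hβ ?_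
      intro x
      have hsub : {i | x ∈ Ts β i} ⊆ Iic (E (f x) β) := fun i hi => hi.2
      have hIic : #(Iic (E (f x) β)) < lam := by
        have h1 : (Iic (E (f x) β) : Set J) ⊆ insert (E (f x) β) (Iio (E (f x) β)) := by
          intro γ hγ
          rcases eq_or_lt_of_le (mem_Iic.mp hγ) with h | h
          · exact mem_insert_iff.mpr (Or.inl h)
          · exact mem_insert_iff.mpr (Or.inr h)
        calc #(Iic (E (f x) β)) ≤ #(insert (E (f x) β) (Iio (E (f x) β)) : Set J) :=
              mk_le_mk_of_subset h1
          _ ≤ #(Iio (E (f x) β)) + 1 := mk_insert_le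
          _ < lam := Cardinal.add_lt_of_lt hlam (mk_Iio_ord_toType _) (one_lt_aleph0.trans_le hlam)
      exact (mk_le_mk_of_subset hsub).trans_lt hIic
    · push_neg at hcaseA
      choose i hi using hcaseA
      set S : T → Set X := fun β => G β \ Ts β (i β) with hS
      have hSU : ∀ β, S β ∈ (U : Filter X) := by
        intro β
        rw [hS]
        simp only [diff_eq]
        exact inter_mem (hGU β) ((Ultrafilter.compl_mem_iff_notMem).mpr (hi β))
      have hSprop : ∀ {x β}, x ∈ S β → x ∈ G β ∧ E (f x) β < i β := by
        rintro x β ⟨h1, h2⟩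
        refine ⟨h1, ?_⟩
        by_contra h
        push_neg at h
        exact h2 ⟨h1, h⟩
      -- pigeonhole: some fiber of i has size ≥ lam
      have hpig : ∃ j : J, lam ≤ #{β : T // i β = j} := by
        by_contra h
        push_neg at h
        have h1 : #T = Cardinal.sum (fun j : J => #{β : T // i β = j}) := by
          rw [← Cardinal.mk_sigma]
          exact (Cardinal.mk_congr (Equiv.sigmaFiberEquiv i)).symm
        have h2 : Cardinal.sum (fun j : J => #{β : T // i β = j}) ≤
            Cardinal.sum (fun _ : J => lam) := Cardinal.sum_le_sum _ _ fun j => (h j).le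
        rw [Cardinal.sum_const'] at h2
        have h3 : #T ≤ lam := by
          rw [h1]
          calc Cardinal.sum (fun j : J => #{β : T // i β = j}) ≤ #J * lam := h2
            _ = lam * lam := by rw [hJcard]
            _ = lam := mul_eq_self hlam
        rw [hTcard, hκeq] at h3
        exact absurd h3 (not_le.mpr (Order.lt_succ lam))
      obtain ⟨j', hj'⟩ := hpig
      obtain ⟨g⟩ : Nonempty (J ↪ {β : T // i β = j'}) :=
        (Cardinal.le_def _ _).mp (by rw [hJcard]; exact hj')
      refine cardRegular_of_family' _ lam hJcard (fun j => S (g j).1) (fun j => hSU _) ?_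
      intro x
      have hmap : ∀ jh : {j | x ∈ S (g j).1}, E (f x) (g jh.1).1 < j' := by
        intro jh
        have := (hSprop jh.2).2
        rwa [(g jh.1).2] at this
      have hinj : Function.Injective
          (fun jh : {j | x ∈ S (g j).1} => (⟨E (f x) (g jh.1).1, hmap jh⟩ : Iio j')) := by
        intro a b hab
        have heq : E (f x) (g a.1).1 = E (f x) (g b.1).1 := congrArg Subtype.val hab
        have ha : (g a.1).1 < f x := (hGiff.mp (hSprop a.2).1).2
        have hb : (g b.1).1 < f x := (hGiff.mp (hSprop b.2).1).2
        have := hEinj (f x) ha hb heq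
        exact Subtype.ext (g.injective (Subtype.ext this))
      calc #{j | x ∈ S (g j).1} ≤ #(Iio j') := Cardinal.mk_le_of_injective hinj
        _ < lam := mk_Iio_ord_toType j'
end

section
/- Let λ be an infinite cardinal and U an ultrafilter. If U is λ⁺-decomposable, then either U is cf(λ)-decomposable or U is (κ, λ⁺)-regular for some cardinal κ < λ. In particular, if λ is regular and U is λ⁺-decomposable, then U is λ-decomposable. -/
open Filter Set Cardinal

universe u v w

set_option synthInstance.maxHeartbeats 1000000
set_option maxHeartbeats 1000000

section PrikryAux

open Ordinal

variable {X : Type u}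

instance aux_isWellOrder_toType (o : Ordinal.{u}) : IsWellOrder o.ToType (· < ·) :=
  isWellOrder_lt

/-- Cardinality of an initial segment of `c.ord.ToType` is less than `c`. -/
lemma aux_mk_Iio_lt (c : Cardinal.{u}) (a : c.ord.ToType) :
    #{y : c.ord.ToType // y < a} < c := by
  have h1 : #{y : c.ord.ToType // y < a} =
      (Ordinal.typein (α := c.ord.ToType) (· < ·) a).card :=
    Ordinal.card_typein a
  have h2 : Ordinal.typein (α := c.ord.ToType) (· < ·) a <
      Ordinal.type (α := c.ord.ToType) (· < ·) :=
    Ordinal.typein_lt_type _ a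
  rw [Ordinal.type_toType] at h2
  rw [h1]
  exact Cardinal.lt_ord.1 h2

/-- A subset of `o.ToType` of size less than `cof o` is strictly bounded. -/
lemma aux_bounded_of_card_lt {o : Ordinal.{u}} (S : Set o.ToType) (h : #S < o.cof) :
    ∃ b, ∀ a ∈ S, a < b := by
  by_contra hne
  push_neg at hne
  have hc : IsCofinal S := fun a => hne a
  have h' := Order.cof_le hc
  rw [Ordinal.cof_toType] at h'
  exact absurd h (not_lt.2 h')

/-- Transfer a regularity family on any type of the right cardinality to `CardRegular`. -/
lemma aux_cardRegular_of_family (F : Filter X) (kappa delta : Cardinal.{u}) {I : Type u}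
    (hI : #I = delta) (B : I → Set X) (hB : ∀ i, B i ∈ F)
    (hreg : ∀ σ : Set I, kappa ≤ #σ → (⋂ i ∈ σ, B i) = ∅) :
    CardRegular F kappa delta := by
  have : #(delta.out) = #I := by rw [Cardinal.mk_out, hI]
  obtain ⟨e⟩ := Cardinal.eq.1 this
  refine ⟨fun α => B (e α), fun α => hB (e α), fun σ hσ => ?_⟩
  have himg : (⋂ i ∈ e '' σ, B i) = ⋂ α ∈ σ, B (e α) := Set.biInter_image
  rw [← himg]
  refine hreg _ ?_
  rwa [Cardinal.mk_image_eq e.injective]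

/-- From `λ⁺`-decomposability extract a function `f : X → (λ⁺).ord.ToType` such that the
preimage of every set of size `≤ λ` is not in the ultrafilter. -/
lemma aux_exists_fn (U : Ultrafilter X) (lam : Cardinal.{u}) (hlam : ℵ₀ ≤ lam)
    (hdec : Decomposable (U : Filter X) (Order.succ lam)) :
    ∃ f : X → (Order.succ lam).ord.ToType,
      ∀ S : Set (Order.succ lam).ord.ToType, #S ≤ lam → f ⁻¹' S ∉ (U : Filter X) := by
  classical
  set O := (Order.succ lam).ord.ToType with hO
  rw [Decomposable, Indecomposable] at hdec
  push_neg at hdec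
  obtain ⟨P, hPcard, hPU, hP⟩ := hdec
  have hOcard : #O = Order.succ lam := Cardinal.mk_ord_toType _
  have hOne : Nonempty O := by
    rw [← Cardinal.mk_ne_zero_iff, hOcard]
    exact ne_of_gt (lt_of_lt_of_le (lt_of_lt_of_le Cardinal.aleph0_pos hlam)
      (le_of_lt (Order.lt_succ lam)))
  obtain ⟨j⟩ : Nonempty (↥P ↪ O) := by
    rw [← Cardinal.le_def, hOcard]; exact hPcard
  let f : X → O := fun x =>
    if h : ∃ p : ↥P, x ∈ (p : Set X) then j h.choose else hOne.some
  refine ⟨f, fun S hS hmem => ?_⟩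
  set Q : Set (Set X) := {s | ∃ hp : s ∈ P, j ⟨s, hp⟩ ∈ S} with hQdef
  have hQmem : ∀ q : ↥Q, ∃ hp : (q : Set X) ∈ P, j ⟨(q : Set X), hp⟩ ∈ S := fun q => q.2
  have hQP : Q ⊆ P := by
    intro s hs
    obtain ⟨hp, -⟩ := hs
    exact hp
  have hQS : #Q ≤ #S := by
    refine Cardinal.mk_le_of_injective
      (f := fun q : ↥Q => (⟨j ⟨(q : Set X), (hQmem q).choose⟩, (hQmem q).choose_spec⟩ : ↥S)) ?_
    intro q q' h
    have h1 : j ⟨(q : Set X), (hQmem q).choose⟩ = j ⟨(q' : Set X), (hQmem q').choose⟩ :=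
      congrArg Subtype.val h
    have h2 := j.injective h1
    have h3 := congrArg Subtype.val h2
    exact Subtype.ext h3
  have hQsmall : #Q < Order.succ lam := lt_of_le_of_lt (hQS.trans hS) (Order.lt_succ lam)
  have hQnot : ⋃₀ Q ∉ (U : Filter X) := hP Q hQP hQsmall
  apply hQnot
  have hsub : f ⁻¹' S ∩ ⋃₀ P ⊆ ⋃₀ Q := by
    rintro x ⟨hxS, hxP⟩
    obtain ⟨p, hpP, hxp⟩ := hxP
    have hex : ∃ p : ↥P, x ∈ (p : Set X) := ⟨⟨p, hpP⟩, hxp⟩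
    have hfx : f x = j hex.choose := dif_pos hex
    refine ⟨hex.choose, ?_, hex.choose_spec⟩
    refine ⟨hex.choose.2, ?_⟩
    rw [Subtype.coe_eta]
    have hxS' : f x ∈ S := hxS
    rw [hfx] at hxS'
    exact hxS'
  exact Filter.mem_of_superset (Filter.inter_mem hmem hPU) hsub

/-- `(κ, λ⁺)`-regularity with `κ ≤ λ` and `λ` regular implies `λ`-decomposability. -/
lemma aux_decomposable_of_regular (U : Ultrafilter X) (lam : Cardinal.{u})
    (hlam : lam.IsRegular) (kappa : Cardinal.{u}) (hk : kappa ≤ lam)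
    (h : CardRegular (U : Filter X) kappa (Order.succ lam)) :
    Decomposable (U : Filter X) lam := by
  classical
  obtain ⟨B, hB, hreg⟩ := h
  set L := lam.ord.ToType with hLdef
  have hLcard : #L = lam := Cardinal.mk_ord_toType _
  obtain ⟨ι⟩ : Nonempty (L ↪ (Order.succ lam).out) := by
    rw [← Cardinal.le_def, Cardinal.mk_out, hLcard]
    exact le_of_lt (Order.lt_succ lam)
  set B' : L → Set X := fun a => B (ι a) with hB'def
  have hB'U : ∀ a, B' a ∈ (U : Filter X) := fun a => hB (ι a)
  have hB'reg : ∀ σ : Set L, lam ≤ #σ → (⋂ a ∈ σ, B' a) = ∅ := by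
    intro σ hσ
    have himg : (⋂ i ∈ ι '' σ, B i) = ⋂ a ∈ σ, B (ι a) := Set.biInter_image
    rw [← himg]
    refine hreg _ ?_
    rw [Cardinal.mk_image_eq ι.injective]
    exact hk.trans hσ
  -- choose for each x a strict bound of the small set {a | x ∈ B' a}
  have hbd : ∀ x : X, ∃ b : L, ∀ a : L, x ∈ B' a → a < b := by
    intro x
    have hsmall : #{a : L | x ∈ B' a} < lam := by
      by_contra hge
      have := hB'reg {a : L | x ∈ B' a} (not_lt.1 hge)
      have hx : x ∈ ⋂ a ∈ {a : L | x ∈ B' a}, B' a :=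
        Set.mem_iInter₂.2 fun a ha => ha
      rw [this] at hx
      exact hx
    have : #{a : L | x ∈ B' a} < lam.ord.cof := by rwa [hlam.cof_eq]
    obtain ⟨b, hb⟩ := aux_bounded_of_card_lt _ this
    exact ⟨b, fun a ha => hb a ha⟩
  choose F hF using hbd
  intro hind
  obtain ⟨Q, hQP, hQlt, hQU⟩ := hind (Set.range fun a : L => F ⁻¹' {a})
    (by
      refine le_trans Cardinal.mk_range_le ?_
      rw [hLcard])
    (by
      have : ⋃₀ (Set.range fun a : L => F ⁻¹' {a}) = Set.univ := by
        ext x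
        simp only [Set.mem_sUnion, Set.mem_range, Set.mem_univ, iff_true]
        exact ⟨F ⁻¹' {F x}, ⟨F x, rfl⟩, rfl⟩
      rw [this]
      exact Filter.univ_mem)
  set S : Set L := {a : L | F ⁻¹' {a} ∈ Q ∧ ∃ x, F x = a} with hSdef
  have hSmem : ∀ a : ↥S, F ⁻¹' {(a : L)} ∈ Q ∧ ∃ x, F x = (a : L) := fun a => a.2
  have hScard : #S ≤ #Q := by
    refine Cardinal.mk_le_of_injective
      (f := fun a : ↥S => (⟨F ⁻¹' {(a : L)}, (hSmem a).1⟩ : ↥Q)) ?_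
    intro a a' h
    have h1 : F ⁻¹' {(a : L)} = F ⁻¹' {(a' : L)} := congrArg Subtype.val h
    obtain ⟨x, hx⟩ := (hSmem a).2
    have hx1 : x ∈ F ⁻¹' {(a : L)} := by simp [hx]
    have hx2 : x ∈ F ⁻¹' {(a' : L)} := h1 ▸ hx1
    have hx3 : F x = (a' : L) := hx2
    exact Subtype.ext (by rw [← hx, hx3])
  have hSsmall : #S < lam.ord.cof := by
    rw [hlam.cof_eq]; exact lt_of_le_of_lt hScard hQlt
  obtain ⟨b, hb⟩ := aux_bounded_of_card_lt S hSsmall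
  have hdisj : B' b ∩ ⋃₀ Q = ∅ := by
    ext x
    simp only [Set.mem_inter_iff, Set.mem_sUnion, Set.mem_empty_iff_false, iff_false,
      not_and]
    rintro hxB ⟨q, hqQ, hxq⟩
    obtain ⟨a, rfl⟩ := hQP hqQ
    have hFx : F x = a := hxq
    have haS : a ∈ S := ⟨hqQ, ⟨x, hFx⟩⟩
    have h1 : a < b := hb a haS
    have h2 : b < F x := hF x b hxB
    rw [hFx] at h2
    exact absurd h1 (lt_asymm h2)
  have : (∅ : Set X) ∈ (U : Filter X) := by
    rw [← hdisj]
    exact Filter.inter_mem (hB'U b) hQU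
  exact Filter.empty_notMem _ this

/-- The main construction: a `λ⁺`-decomposable, `cf(λ)`-indecomposable ultrafilter is
`(ν⁺, λ⁺)`-regular for some `ν < λ`. -/
lemma aux_main_construction (U : Ultrafilter X) (lam : Cardinal.{u}) (hlam : ℵ₀ ≤ lam)
    (hdec : Decomposable (U : Filter X) (Order.succ lam))
    (hind : Indecomposable (U : Filter X) lam.ord.cof lam.ord.cof) :
    ∃ nu : Cardinal.{u}, nu < lam ∧
      CardRegular (U : Filter X) (Order.succ nu) (Order.succ lam) := by
  classical
  obtain ⟨f, hf⟩ := aux_exists_fn U lam hlam hdec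
  have hOcard : #(Order.succ lam).ord.ToType = Order.succ lam := Cardinal.mk_ord_toType _
  have hLcard : #lam.ord.ToType = lam := Cardinal.mk_ord_toType _
  -- injections of initial segments into lam.ord.ToType
  have he : ∀ b : (Order.succ lam).ord.ToType,
      Nonempty ({y : (Order.succ lam).ord.ToType // y < b} ↪ lam.ord.ToType) := by
    intro b
    rw [← Cardinal.le_def, hLcard]
    exact Order.lt_succ_iff.1 (aux_mk_Iio_lt _ b)
  let e : ∀ b : (Order.succ lam).ord.ToType,
      {y : (Order.succ lam).ord.ToType // y < b} ↪ lam.ord.ToType := fun b => (he b).some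
  -- unbounded subset of lam.ord.ToType of size cf(λ)
  obtain ⟨S, hSunb, hScard⟩ := Order.exists_cof_eq lam.ord.ToType
  rw [Ordinal.cof_toType] at hScard
  -- the final segments are in U
  have hcov : ∀ α : (Order.succ lam).ord.ToType, f ⁻¹' (Set.Ioi α) ∈ (U : Filter X) := by
    intro α
    have hIic : #(Set.Iic α) ≤ lam := by
      rw [← Set.Iio_insert]
      refine le_trans Cardinal.mk_insert_le ?_
      refine le_trans (add_le_add_left (Order.lt_succ_iff.1 (aux_mk_Iio_lt _ α)) 1) ?_
      exact le_of_eq (Cardinal.add_one_eq hlam)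
    have h1 : f ⁻¹' (Set.Iic α) ∉ (U : Filter X) := hf _ hIic
    have h2 : f ⁻¹' (Set.Ioi α) = (f ⁻¹' (Set.Iic α))ᶜ := by
      rw [← Set.preimage_compl, Set.compl_Iic]
    rw [h2]
    exact (Ultrafilter.compl_mem_iff_notMem).2 h1
  -- key step: for each α there is a bound b with the truncated set in U
  have key : ∀ α : (Order.succ lam).ord.ToType, ∃ b : lam.ord.ToType,
      {x : X | ∃ h : α < f x, e (f x) ⟨α, h⟩ < b} ∈ (U : Filter X) := by
    intro α
    set A : lam.ord.ToType → Set X :=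
      fun a => {x : X | ∃ h : α < f x, e (f x) ⟨α, h⟩ ≤ a} with hAdef
    have hPU : ⋃₀ ((fun a => A a) '' S) ∈ (U : Filter X) := by
      refine Filter.mem_of_superset (hcov α) ?_
      intro x hx
      obtain ⟨a, haS, hta⟩ := hSunb (e (f x) ⟨α, hx⟩)
      exact ⟨A a, ⟨a, haS, rfl⟩, ⟨hx, hta⟩⟩
    obtain ⟨Q, hQP, hQlt, hQU⟩ := hind ((fun a => A a) '' S)
      (le_of_le_of_eq Cardinal.mk_image_le hScard) hPU
    have hw : ∀ q : ↥Q, ∃ a : lam.ord.ToType, (q : Set X) = A a := by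
      intro q
      obtain ⟨a, -, h⟩ := hQP q.2
      exact ⟨a, h.symm⟩
    choose w hw using hw
    have hrange : #(Set.range w) < lam.ord.cof :=
      lt_of_le_of_lt Cardinal.mk_range_le hQlt
    obtain ⟨b, hb⟩ := aux_bounded_of_card_lt _ hrange
    refine ⟨b, Filter.mem_of_superset hQU ?_⟩
    rintro x ⟨q, hqQ, hxq⟩
    have hq : q = A (w ⟨q, hqQ⟩) := hw ⟨q, hqQ⟩
    rw [hq] at hxq
    obtain ⟨h1, h2⟩ := hxq
    exact ⟨h1, lt_of_le_of_lt h2 (hb _ ⟨⟨q, hqQ⟩, rfl⟩)⟩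
  choose g hg using key
  -- pigeonhole: some fiber of g has size λ⁺
  have hfib : ∃ b : lam.ord.ToType,
      ¬ #(g ⁻¹' {b} : Set (Order.succ lam).ord.ToType) < Order.succ lam := by
    by_contra hall
    push_neg at hall
    have hun : (Set.univ : Set (Order.succ lam).ord.ToType) = ⋃ b : lam.ord.ToType,
        g ⁻¹' {b} := by
      ext α
      simp only [Set.mem_univ, Set.mem_iUnion, Set.mem_preimage, Set.mem_singleton_iff,
        true_iff]
      exact ⟨g α, rfl⟩
    have h1 : Order.succ lam ≤ #lam.ord.ToType *
        ⨆ b : lam.ord.ToType, #(g ⁻¹' {b} : Set (Order.succ lam).ord.ToType) := by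
      calc Order.succ lam = #(Set.univ : Set (Order.succ lam).ord.ToType) := by
            rw [Cardinal.mk_univ, hOcard]
        _ = #(⋃ b : lam.ord.ToType, g ⁻¹' {b}) := by rw [hun]
        _ ≤ _ := Cardinal.mk_iUnion_le _
    have hregs : (Order.succ lam).IsRegular := Cardinal.isRegular_succ hlam
    have hsup : (⨆ b : lam.ord.ToType, #(g ⁻¹' {b} : Set (Order.succ lam).ord.ToType)) <
        Order.succ lam := by
      refine Cardinal.iSup_lt_of_isRegular hregs ?_ hall
      rw [hLcard]; exact Order.lt_succ lam
    have h2 : #lam.ord.ToType *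
        (⨆ b : lam.ord.ToType, #(g ⁻¹' {b} : Set (Order.succ lam).ord.ToType)) <
        Order.succ lam := by
      refine Cardinal.mul_lt_of_lt (hlam.trans (le_of_lt (Order.lt_succ lam))) ?_ hsup
      rw [hLcard]; exact Order.lt_succ lam
    exact absurd (lt_of_le_of_lt h1 h2) (lt_irrefl _)
  obtain ⟨bstar, hbstar⟩ := hfib
  have hTcard : #(g ⁻¹' {bstar} : Set (Order.succ lam).ord.ToType) = Order.succ lam := by
    exact le_antisymm (le_of_le_of_eq (Cardinal.mk_set_le _) hOcard) (not_lt.1 hbstar)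
  have hnu : #{y : lam.ord.ToType // y < bstar} < lam := aux_mk_Iio_lt lam bstar
  refine ⟨#{y : lam.ord.ToType // y < bstar}, hnu, ?_⟩
  refine aux_cardRegular_of_family (U : Filter X) _ (Order.succ lam) hTcard
    (fun i : ↥(g ⁻¹' {bstar}) =>
      {x : X | ∃ h : (i : (Order.succ lam).ord.ToType) < f x, e (f x) ⟨i, h⟩ < bstar}) ?_ ?_
  · intro i
    have hgi : g (i : (Order.succ lam).ord.ToType) = bstar := i.2
    have hgU := hg (i : (Order.succ lam).ord.ToType)
    rw [hgi] at hgU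
    exact hgU
  · intro σ hσ
    by_contra hne
    obtain ⟨x, hx⟩ := Set.nonempty_iff_ne_empty.2 hne
    have hxm : ∀ i : ↥σ, ∃ h : ((i : ↥(g ⁻¹' {bstar})) : (Order.succ lam).ord.ToType) < f x,
        e (f x) ⟨((i : ↥(g ⁻¹' {bstar})) : (Order.succ lam).ord.ToType), h⟩ < bstar :=
      fun i => Set.mem_iInter₂.1 hx i.1 i.2
    have hinj : Function.Injective
        (fun i : ↥σ => (⟨e (f x) ⟨_, (hxm i).choose⟩, (hxm i).choose_spec⟩ :
          {y : lam.ord.ToType // y < bstar})) := by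
      intro i i' h
      have h1 := congrArg Subtype.val h
      have h2 := (e (f x)).injective h1
      have h3 := congrArg Subtype.val h2
      exact Subtype.ext (Subtype.ext h3)
    have hle : #σ ≤ #{y : lam.ord.ToType // y < bstar} := Cardinal.mk_le_of_injective hinj
    exact absurd (lt_of_lt_of_le (Order.lt_succ _) (hσ.trans hle)) (lt_irrefl _)

end PrikryAux

theorem prikry_decomposable {X : Type u} (U : Ultrafilter X)
    (lam : Cardinal.{u}) (hlam : ℵ₀ ≤ lam)
    (hdec : Decomposable (U : Filter X) (Order.succ lam)) :
    (Decomposable (U : Filter X) lam.ord.cof ∨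
      ∃ kappa : Cardinal.{u}, kappa < lam ∧
        CardRegular (U : Filter X) kappa (Order.succ lam)) ∧
    (lam.IsRegular → Decomposable (U : Filter X) lam) := by
  classical
  have hmain : ¬ Decomposable (U : Filter X) lam.ord.cof →
      ∃ nu : Cardinal.{u}, nu < lam ∧
        CardRegular (U : Filter X) (Order.succ nu) (Order.succ lam) := fun h =>
    aux_main_construction U lam hlam hdec (not_not.1 h)
  constructor
  · by_cases h : Decomposable (U : Filter X) lam.ord.cof
    · exact Or.inl h
    · obtain ⟨nu, hnu, hreg⟩ := hmain h
      by_cases hs : Order.succ nu < lam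
      · exact Or.inr ⟨Order.succ nu, hs, hreg⟩
      · have hsle : Order.succ nu ≤ lam := Order.succ_le_of_lt hnu
        have heq : Order.succ nu = lam := le_antisymm hsle (not_lt.1 hs)
        have hnuinf : ℵ₀ ≤ nu := by
          by_contra hfin
          obtain ⟨n, rfl⟩ := Cardinal.lt_aleph0.1 (not_le.1 hfin)
          have h1 : Order.succ ((n : ℕ) : Cardinal.{u}) ≤ (((n + 1 : ℕ) : ℕ) : Cardinal.{u}) := by
            refine Order.succ_le_of_lt ?_
            exact_mod_cast Nat.lt_succ_self n
          have h2 : Order.succ ((n : ℕ) : Cardinal.{u}) < ℵ₀ :=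
            lt_of_le_of_lt h1 (Cardinal.nat_lt_aleph0 _)
          rw [heq] at h2
          exact absurd hlam (not_le.2 h2)
        have hregular : lam.IsRegular := heq ▸ Cardinal.isRegular_succ hnuinf
        have hdecl : Decomposable (U : Filter X) lam :=
          aux_decomposable_of_regular U lam hregular (Order.succ nu) hsle hreg
        rw [hregular.cof_eq]
        exact Or.inl hdecl
  · intro hregular
    by_cases h : Decomposable (U : Filter X) lam.ord.cof
    · rwa [hregular.cof_eq] at h
    · obtain ⟨nu, hnu, hreg⟩ := hmain h
      exact aux_decomposable_of_regular U lam hregular (Order.succ nu)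
        (Order.succ_le_of_lt hnu) hreg
end

section
/- Let U be an ultrafilter on a set X, let φ : X → Ordinal be a function, and let ⟨U_x : x ∈ X⟩ be a family of ultrafilters on X such that U is the U-limit of ⟨U_x : x ∈ X⟩, i.e., for every A ⊆ X, A ∈ U if and only if {x ∈ X : A ∈ U_x} ∈ U. Then for U-almost all x ∈ X, the set {y ∈ X : φ(x) ≤ φ(y)} belongs to U_x; equivalently, the set {x ∈ X : {y ∈ X : φ(y) < φ(x)} ∈ U_x} does not belong to U. -/
open Filter Set Cardinal

universe u v w

/-!
Define `A` by well-founded recursion along `phi`: `x ∈ A` iff `A ∩ {y | phi y < phi x} ∉ Ux x`.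
Whenever `{y | phi y < phi x} ∈ Ux x`, this makes `A ∈ Ux x` equivalent to `x ∉ A`. On the other
hand, `U` being the `U`-limit of the `Ux x` forces `x ∈ A ↔ A ∈ Ux x` for `U`-almost all `x`.
Hence `{x | {y | phi y < phi x} ∈ Ux x} ∉ U`, and the first claim is its complement.
-/

theorem WellFounded.exists_set_forall_mem_iff {X : Type u} {r : X → X → Prop}
    (hr : WellFounded r) (G : X → Set X → Prop) :
    ∃ A : Set X, ∀ x, x ∈ A ↔ G x (A ∩ {y | r y x}) := by
  refine ⟨{x | hr.fix (fun x ih => G x {y | ∃ h : r y x, ih y h}) x}, fun x => ?_⟩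
  rw [Set.mem_ofPred_eq, hr.fix_eq, Set.inter_comm]
  simp only [exists_prop]
  rfl

theorem WellFounded.exists_set_mem_iff_notMem {X : Type u} {r : X → X → Prop}
    (hr : WellFounded r) (F : X → Filter X) :
    ∃ A : Set X, ∀ x, {y | r y x} ∈ F x → (A ∈ F x ↔ x ∉ A) := by
  obtain ⟨A, hA⟩ := hr.exists_set_forall_mem_iff fun x S => S ∉ F x
  refine ⟨A, fun x hpred => ?_⟩
  rw [hA x, Filter.inter_mem_iff, and_iff_left hpred, not_not]

theorem Ultrafilter.setOf_mem_iff_mem_mem_of_limit {X : Type u} (U : Ultrafilter X)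
    (F : X → Filter X) (hlim : ∀ A : Set X, A ∈ U ↔ {x | A ∈ F x} ∈ U) (A : Set X) :
    {x | x ∈ A ↔ A ∈ F x} ∈ U := by
  by_cases hA : A ∈ U
  · filter_upwards [hA, (hlim A).mp hA] with x hxA hFx using iff_of_true hxA hFx
  · have hF : {x | A ∈ F x}ᶜ ∈ U := U.compl_mem_iff_notMem.mpr (mt (hlim A).mpr hA)
    filter_upwards [U.compl_mem_iff_notMem.mpr hA, hF] with x hxA hFx using iff_of_false hxA hFx

theorem Ultrafilter.setOf_predecessors_mem_notMem_of_limit {X : Type u} (U : Ultrafilter X)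
    (F : X → Filter X) (hlim : ∀ A : Set X, A ∈ U ↔ {x | A ∈ F x} ∈ U)
    {r : X → X → Prop} (hr : WellFounded r) :
    {x | {y | r y x} ∈ F x} ∉ U := by
  intro hpred
  obtain ⟨A, hA⟩ := hr.exists_set_mem_iff_notMem F
  have hempty : ∅ ∈ U := by
    filter_upwards [hpred, U.setOf_mem_iff_mem_mem_of_limit F hlim A] with x hx hagree
    exact iff_not_self (hagree.trans (hA x hx))
  exact U.empty_notMem hempty

theorem ketonen_irrefl {X : Type u} (U : Ultrafilter X)
    (phi : X → Ordinal.{v}) (Ux : X → Ultrafilter X)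
    (hlim : ∀ A : Set X, A ∈ U ↔ {x | A ∈ Ux x} ∈ U) :
    {x | {y | phi x ≤ phi y} ∈ Ux x} ∈ U ∧
      {x | {y | phi y < phi x} ∈ Ux x} ∉ U := by
  have hlt : {x | {y | phi y < phi x} ∈ Ux x} ∉ U :=
    U.setOf_predecessors_mem_notMem_of_limit (fun x => Ux x) hlim
      (InvImage.wf phi Ordinal.lt_wf)
  have hcompl : {x | {y | phi x ≤ phi y} ∈ Ux x} = {x | {y | phi y < phi x} ∈ Ux x}ᶜ := by
    ext x
    simp only [Set.mem_ofPred_eq, Set.mem_compl_iff, ← not_lt, ← Set.compl_ofPred,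
      Ultrafilter.compl_mem_iff_notMem]
  rw [hcompl, Ultrafilter.compl_mem_iff_notMem]
  exact ⟨hlt, hlt⟩
end

section
/- Let κ ≤ δ be infinite cardinals and let U be a (κ,δ)-regular ultrafilter. Then U is η-decomposable for every regular cardinal η with κ ≤ η ≤ δ. -/
open Filter Set Cardinal

universe u v w

/-!
Restricting a `(κ, δ)`-regular family to `η ≤ δ` indices gives `η` sets in `U` such that each
point lies in fewer than `κ ≤ η = cf η` of them. Sending each point to a strict upper bound of
the indices of the sets containing it yields `f : X → η` tending to `η` along `U`. The fibres of
`f` then witness decomposability: fewer than `η` of them all lie below some index `a`, and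
`{x | a ≤ f x} ∈ U` avoids them.
-/

theorem CardRegular.exists_card_setOf_mem_lt {X ι : Type u} {F : Filter X}
    {κ δ : Cardinal.{u}} (h : CardRegular F κ δ) (hι : #ι ≤ δ) :
    ∃ C : ι → Set X, (∀ i, C i ∈ F) ∧ ∀ x, #{i | x ∈ C i} < κ := by
  obtain ⟨B, hBF, hBκ⟩ := h
  obtain ⟨e⟩ : Nonempty (ι ↪ δ.out) := by rwa [← Cardinal.le_def, mk_out]
  refine ⟨B ∘ e, fun i => hBF (e i), fun x => lt_of_not_ge fun hx => ?_⟩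
  have hmem : x ∈ ⋂ α ∈ e '' {i | x ∈ B (e i)}, B α := by
    simp only [mem_iInter, mem_image]
    rintro _ ⟨i, hi, rfl⟩
    exact hi
  rwa [hBκ _ (by rwa [mk_image_eq e.injective])] at hmem

theorem exists_tendsto_atTop_of_card_setOf_mem_lt_cof {X ι : Type*} [LinearOrder ι]
    {F : Filter X} {C : ι → Set X} (hCF : ∀ a, C a ∈ F)
    (hcard : ∀ x, #{a | x ∈ C a} < Order.cof ι) :
    ∃ f : X → ι, Tendsto f F atTop := by
  have hbdd : ∀ x, ∃ b, ∀ a ∈ {a | x ∈ C a}, a < b := fun x =>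
    not_isCofinal_iff.1 fun hcof => (Order.cof_le hcof).not_gt (hcard x)
  choose f hf using hbdd
  exact ⟨f, tendsto_atTop.2 fun a => mem_of_superset (hCF a) fun x hx => (hf x a hx).le⟩

theorem decomposable_of_tendsto_atTop {X ι : Type u} [LinearOrder ι] {F : Filter X} [F.NeBot]
    {η : Cardinal.{u}} {f : X → ι} (hf : Tendsto f F atTop) (hι : #ι ≤ η)
    (hη : η ≤ Order.cof ι) : Decomposable F η := by
  intro hind
  obtain ⟨Q, hQfib, hQη, hQF⟩ := hind (range fun a => f ⁻¹' {a}) (mk_range_le.trans hι)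
    (by rw [sUnion_eq_univ_iff.2 fun x => ⟨_, mem_range_self (f x), rfl⟩]; exact univ_mem)
  have hfib : ∀ q : Q, ∃ a, f ⁻¹' {a} = q := fun q => hQfib q.2
  choose idx hidx using hfib
  obtain ⟨b, hb⟩ : ∃ b, ∀ a ∈ range idx, a < b :=
    not_isCofinal_iff.1 fun hcof =>
      (Order.cof_le hcof).not_gt (mk_range_le.trans_lt (hQη.trans_le hη))
  obtain ⟨x, ⟨q, hqQ, hxq⟩, hbx : b ≤ f x⟩ :=
    Filter.nonempty_of_mem (inter_mem hQF (hf.eventually_ge_atTop b))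
  have hfx : f x = idx ⟨q, hqQ⟩ := by
    rw [← mem_singleton_iff, ← mem_preimage, hidx ⟨q, hqQ⟩]
    exact hxq
  exact (hb _ (mem_range_self _)).not_ge (hfx ▸ hbx)

theorem decomposable_of_regular_general {X : Type u} (U : Ultrafilter X)
    (kappa delta : Cardinal.{u})
    (hreg : CardRegular (U : Filter X) kappa delta) :
    ∀ eta : Cardinal.{u}, eta.IsRegular → kappa ≤ eta → eta ≤ delta →
      Decomposable (U : Filter X) eta := by
  intro eta hη hκη hηδ
  have hcof : Order.cof eta.ord.ToType = eta := by rw [Ordinal.cof_toType, hη.cof_ord]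
  obtain ⟨C, hCU, hCκ⟩ :=
    hreg.exists_card_setOf_mem_lt (ι := eta.ord.ToType) (by rwa [mk_ord_toType])
  obtain ⟨f, hf⟩ := exists_tendsto_atTop_of_card_setOf_mem_lt_cof hCU fun x =>
    (hCκ x).trans_le (hκη.trans hcof.ge)
  exact decomposable_of_tendsto_atTop hf (mk_ord_toType eta).le hcof.ge

theorem decomposable_of_regular {X : Type u} (U : Ultrafilter X)
    (kappa delta : Cardinal.{u}) (hk : ℵ₀ ≤ kappa) (hkd : kappa ≤ delta)
    (hreg : CardRegular (U : Filter X) kappa delta) :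
    ∀ eta : Cardinal.{u}, eta.IsRegular → kappa ≤ eta → eta ≤ delta →
      Decomposable (U : Filter X) eta :=
  decomposable_of_regular_general U kappa delta hreg
end
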